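/- arXiv:2303.04945 — 5 statements merged into one kernel-verified Lean document; each statement's English description precedes it below -/
import Mathlib

section
/- Let a ∈ [0,1] and θ = arcsin(√a). If an estimate θ̂ satisfies |θ̂ − θ| ≤ π/(2r) for some r ≥ 1, then the estimate â = sin²(θ̂) satisfies |â − a| ≤ 2π√(a(1−a))/r + π²/r². -/
open Real

/-- Error propagation in quantum amplitude estimation: an angle estimate
`θ̂` with `|θ̂ − θ| ≤ π/(2r)`, where `θ = arcsin √a`, yields an amplitude
estimate `â = sin² θ̂` with `|â − a| ≤ 2π√(a(1−a))/r + π²/r²`. -/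
theorem qae_amplitude_error
    (a : ℝ) (ha : a ∈ Set.Icc (0 : ℝ) 1)
    (θ : ℝ) (hθ : θ = arcsin (sqrt a))
    (r : ℝ) (hr : 1 ≤ r)
    (θhat : ℝ) (hest : |θhat - θ| ≤ π / (2 * r)) :
    |sin θhat ^ 2 - a| ≤ 2 * π * sqrt (a * (1 - a)) / r + π ^ 2 / r ^ 2 := by
  obtain ⟨ha0, ha1⟩ := ha
  have hr0 : (0 : ℝ) < r := lt_of_lt_of_le one_pos hr
  have hπ : (0 : ℝ) < π := pi_pos
  -- sin θ = √a, cos θ = √(1-a)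
  have hsq : sqrt a ∈ Set.Icc (-1 : ℝ) 1 :=
    ⟨le_trans (by norm_num) (Real.sqrt_nonneg a), by rw [show (1:ℝ) = sqrt 1 by simp]; exact Real.sqrt_le_sqrt ha1⟩
  have hsin : sin θ = sqrt a := by rw [hθ]; exact Real.sin_arcsin hsq.1 hsq.2
  have hcos : cos θ = sqrt (1 - a) := by
    rw [hθ, Real.cos_arcsin, Real.sq_sqrt ha0]
  have hsin2 : sin θ ^ 2 = a := by rw [hsin, Real.sq_sqrt ha0]
  have hsin2θ : sin (2 * θ) = 2 * sqrt (a * (1 - a)) := by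
    rw [Real.sin_two_mul, hsin, hcos, Real.sqrt_mul ha0]; ring
  set δ := θhat - θ with hδ
  have hθhat : θhat = θ + δ := by ring
  -- key identity: sin²(θ+δ) - sin²θ = sin(2θ+δ) * sin δ
  have key : sin θhat ^ 2 - a = sin (2 * θ + δ) * sin δ := by
    rw [hθhat, ← hsin2, Real.sin_add, Real.sin_add, Real.sin_two_mul, Real.cos_two_mul]
    have h1 : sin θ ^ 2 + cos θ ^ 2 = 1 := Real.sin_sq_add_cos_sq θ
    have h2 : sin δ ^ 2 + cos δ ^ 2 = 1 := Real.sin_sq_add_cos_sq δ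
    nlinarith [h1, h2]
  have habsδ : |δ| ≤ π / (2 * r) := hest
  have hsinδ : |sin δ| ≤ π / (2 * r) :=
    le_trans Real.abs_sin_le_abs  habsδ
  have hbound : |sin (2 * θ + δ)| ≤ 2 * sqrt (a * (1 - a)) + π / (2 * r) := by
    rw [Real.sin_add]
    calc |sin (2*θ) * cos δ + cos (2*θ) * sin δ|
        ≤ |sin (2*θ) * cos δ| + |cos (2*θ) * sin δ| := abs_add_le _ _
      _ ≤ |sin (2*θ)| * 1 + 1 * |sin δ| := by
          rw [abs_mul, abs_mul]
          gcongr
          · exact abs_cos_le_one δ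
          · exact abs_cos_le_one _
      _ ≤ 2 * sqrt (a * (1 - a)) + π / (2 * r) := by
          rw [hsin2θ]
          simp only [mul_one, one_mul]
          have : |2 * sqrt (a * (1 - a))| = 2 * sqrt (a * (1 - a)) := by
            rw [abs_of_nonneg]; positivity
          rw [this]
          linarith [hsinδ]
  have hprod : |sin θhat ^ 2 - a| ≤ (2 * sqrt (a * (1 - a)) + π / (2 * r)) * (π / (2 * r)) := by
    rw [key, abs_mul]
    exact mul_le_mul hbound hsinδ (abs_nonneg _) (by positivity)
  refine hprod.trans ?_
  have hs : (0:ℝ) ≤ sqrt (a * (1 - a)) := Real.sqrt_nonneg _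
  have h1 : 2 * sqrt (a * (1 - a)) * (π / (2 * r)) = π * sqrt (a * (1 - a)) / r := by
    field_simp
  have h2 : (π / (2 * r)) * (π / (2 * r)) = π ^ 2 / (4 * r ^ 2) := by
    field_simp; ring
  have : (2 * sqrt (a * (1 - a)) + π / (2 * r)) * (π / (2 * r))
      = π * sqrt (a * (1 - a)) / r + π ^ 2 / (4 * r ^ 2) := by
    field_simp; ring
  rw [this]
  have hA : π * sqrt (a * (1 - a)) / r ≤ 2 * π * sqrt (a * (1 - a)) / r := by
    gcongr; nlinarith
  have hB : π ^ 2 / (4 * r ^ 2) ≤ π ^ 2 / r ^ 2 := by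
    apply div_le_div_of_nonneg_left (by positivity) (by positivity)
    nlinarith [sq_nonneg r]
  linarith
end

section
/- Let θ ∈ [0, π/2] and define in ℝ² the unit vectors w⊥ = (1,0), w = (0,1), and s = cos(θ)·w⊥ + sin(θ)·w. Let O = I − 2·w wᵀ (reflection about w⊥) and V = 2·s sᵀ − I (reflection about s), and G = V·O. Then for every r ∈ ℕ, Gʳ s = cos((2r+1)θ)·w⊥ + sin((2r+1)θ)·w. -/
open Real Matrix

/-- Grover amplitude amplification as a rotation in the 2-dimensional invariant
subspace: `Gʳ s = cos((2r+1)θ)·w⊥ + sin((2r+1)θ)·w`. -/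
theorem grover_rotation
    (θ : ℝ) (hθ : θ ∈ Set.Icc (0 : ℝ) (π / 2))
    (wperp w s : Fin 2 → ℝ)
    (hwperp : wperp = ![1, 0]) (hw : w = ![0, 1])
    (hs : s = fun i => cos θ * wperp i + sin θ * w i)
    (O V G : Matrix (Fin 2) (Fin 2) ℝ)
    (hO : O = 1 - (2 : ℝ) • vecMulVec w w)
    (hV : V = (2 : ℝ) • vecMulVec s s - 1)
    (hG : G = V * O)
    (r : ℕ) :
    (G ^ r).mulVec s =
      fun i => cos ((2 * r + 1) * θ) * wperp i + sin ((2 * r + 1) * θ) * w i := by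
  subst hwperp hw hs
  have hGmat : G = Matrix.of ![![Real.cos (2*θ), -Real.sin (2*θ)],
      ![Real.sin (2*θ), Real.cos (2*θ)]] := by
    have hpyth := Real.sin_sq_add_cos_sq θ
    rw [hG, hV, hO]; ext i j
    fin_cases i <;> fin_cases j <;>
      simp [Matrix.mul_apply, Matrix.sub_apply, Matrix.smul_apply, vecMulVec_apply,
        Matrix.one_apply, Fin.sum_univ_two, Real.cos_two_mul, Real.sin_two_mul] <;>
      nlinarith [hpyth]
  rw [hGmat]
  induction r with
  | zero => funext i; simp
  | succ n ih =>
    rw [pow_succ', ← Matrix.mulVec_mulVec, ih]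
    funext i
    have h1 : ((2 : ℝ) * (n + 1) + 1) * θ = (2 * n + 1) * θ + 2 * θ := by ring
    fin_cases i <;>
      simp [Matrix.mulVec, dotProduct, Fin.sum_univ_two, Nat.cast_add,
        h1, Real.cos_add, Real.sin_add] <;> ring
end

section
/- With the setup of the Grover rotation (G a rotation by 2θ in the plane spanned by w⊥ and w, initial state s at angle θ), the squared overlap of Gʳ s with the good state w equals sin²((2r+1)θ). In particular, if θ = arcsin(1/√N) and r is the nearest integer to (π/(4θ) − 1/2), then |⟨w, Gʳ s⟩|² ≥ 1 − 1/N. -/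
open Real Matrix

/-- Grover search success probability: the squared overlap of `Gʳ s` with the
good state `w` is `sin²((2r+1)θ)`, and for `θ = arcsin(1/√N)` with `r` the
nearest integer to `π/(4θ) − 1/2`, it is at least `1 − 1/N`. -/
theorem grover_success_probability
    (N : ℕ) (hN : 1 ≤ N)
    (θ : ℝ) (hθ : θ = arcsin (1 / Real.sqrt N))
    (wperp w s : Fin 2 → ℝ)
    (hwperp : wperp = ![1, 0]) (hw : w = ![0, 1])
    (hs : s = fun i => cos θ * wperp i + sin θ * w i)
    (O V G : Matrix (Fin 2) (Fin 2) ℝ)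
    (hO : O = 1 - (2 : ℝ) • vecMulVec w w)
    (hV : V = (2 : ℝ) • vecMulVec s s - 1)
    (hG : G = V * O) :
    (∀ r : ℕ, w ⬝ᵥ (G ^ r).mulVec s = sin ((2 * r + 1) * θ)) ∧
      ∀ r : ℕ, (r : ℤ) = round (π / (4 * θ) - 1 / 2) →
        (w ⬝ᵥ (G ^ r).mulVec s) ^ 2 ≥ 1 - 1 / N := by
  have pyth := sin_sq_add_cos_sq θ
  have hrot : ∀ a : ℝ, G.mulVec ![cos a, sin a] = ![cos (a + 2*θ), sin (a + 2*θ)] := by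
    intro a
    subst hG hV hO hs hw hwperp
    funext i
    fin_cases i
    · simp [Matrix.mulVec, Matrix.mul_apply, dotProduct, Fin.sum_univ_two,
        vecMulVec, Matrix.one_apply, cos_add, sin_add, cos_two_mul, sin_two_mul]
      ring
    · simp [Matrix.mulVec, Matrix.mul_apply, dotProduct, Fin.sum_univ_two,
        vecMulVec, Matrix.one_apply, cos_add, sin_add, cos_two_mul, sin_two_mul]
      linear_combination (-2 * Real.sin a) * pyth
  have key : ∀ r : ℕ, (G ^ r).mulVec s = ![cos ((2*r+1)*θ), sin ((2*r+1)*θ)] := by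
    intro r
    induction r with
    | zero =>
      simp only [pow_zero, Matrix.one_mulVec, hs, hw, hwperp]
      funext i; fin_cases i <;> norm_num
    | succ n ih =>
      have : (2*((n:ℝ)+1)+1)*θ = (2*n+1)*θ + 2*θ := by push_cast; ring
      rw [pow_succ', ← Matrix.mulVec_mulVec, ih, hrot]
      push_cast
      rw [this]
  have hwG : ∀ r : ℕ, w ⬝ᵥ (G ^ r).mulVec s = sin ((2 * r + 1) * θ) := by
    intro r
    rw [key r, hw]
    simp [dotProduct, Fin.sum_univ_two]
  refine ⟨hwG, fun r hr => ?_⟩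
  rw [hwG]
  -- now the estimate
  have hN0 : (0:ℝ) < N := by exact_mod_cast hN
  have hsqrt : 0 < Real.sqrt N := Real.sqrt_pos.mpr hN0
  have h01 : 0 < 1 / Real.sqrt N := by positivity
  have h1 : 1 / Real.sqrt N ≤ 1 := by
    rw [div_le_one hsqrt]
    have : (1:ℝ) ≤ N := by exact_mod_cast hN
    nlinarith [Real.sq_sqrt hN0.le, Real.sqrt_nonneg (N:ℝ)]
  have hθpos : 0 < θ := by rw [hθ]; exact Real.arcsin_pos.mpr h01
  have hθle : θ ≤ π/2 := by rw [hθ]; exact Real.arcsin_le_pi_div_two _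
  have hsin : sin θ = 1 / Real.sqrt N := by
    rw [hθ]; exact Real.sin_arcsin (by linarith) h1
  have hsin2 : sin θ ^ 2 = 1 / N := by
    rw [hsin, div_pow, one_pow, Real.sq_sqrt hN0.le]
  -- |(2r+1)θ - π/2| ≤ θ
  have hround : |(π / (4 * θ) - 1 / 2) - (r:ℝ)| ≤ 1/2 := by
    have := abs_sub_round (π / (4 * θ) - 1 / 2)
    have hrr : ((round (π / (4 * θ) - 1 / 2) : ℤ) : ℝ) = (r:ℝ) := by
      exact_mod_cast congrArg (fun z : ℤ => (z : ℝ)) hr.symm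
    rwa [hrr] at this
  have h4θ : 0 < 4*θ := by linarith
  have habs : |(2*(r:ℝ)+1)*θ - π/2| ≤ θ := by
    rw [abs_le] at hround ⊢
    have hA : π ≤ ((r:ℝ) + 1) * (4*θ) := by
      have h' : π/(4*θ) ≤ (r:ℝ) + 1 := by linarith [hround.2]
      exact (div_le_iff₀ h4θ).mp h'
    have hB : (r:ℝ) * (4*θ) ≤ π := by
      have h' : (r:ℝ) ≤ π/(4*θ) := by linarith [hround.1]
      exact (le_div_iff₀ h4θ).mp h'
    constructor
    · nlinarith [hA]
    · nlinarith [hB]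
  -- sin((2r+1)θ) = cos(π/2 - (2r+1)θ) ≥ cos θ ≥ 0
  have hcos : cos θ ≤ sin ((2*(r:ℝ)+1)*θ) := by
    have : sin ((2*(r:ℝ)+1)*θ) = cos ((2*(r:ℝ)+1)*θ - π/2) := by
      rw [Real.cos_sub_pi_div_two]
    rw [this]
    calc cos θ ≤ cos |(2*(r:ℝ)+1)*θ - π/2| :=
          Real.cos_le_cos_of_nonneg_of_le_pi (abs_nonneg _) (by linarith [Real.pi_pos]) habs
      _ = cos ((2*(r:ℝ)+1)*θ - π/2) := Real.cos_abs _
  have hcosnn : 0 ≤ cos θ := Real.cos_nonneg_of_mem_Icc ⟨by linarith, hθle⟩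
  have : cos θ ^ 2 ≤ sin ((2*(r:ℝ)+1)*θ) ^ 2 := by nlinarith
  calc (1:ℝ) - 1/N = cos θ ^ 2 := by rw [← hsin2]; linarith [sin_sq_add_cos_sq θ]
    _ ≤ sin ((2*(r:ℝ)+1)*θ) ^ 2 := this
    _ = sin ((2*(r:ℕ)+1)*θ) ^ 2 := by norm_num
end

section
/- Let θ ∈ [0, π/2], r ∈ ℕ, and R = 2r+1. Suppose measurements of the state Gʳ|s⟩ give a confidence interval sin²(Rθ) ∈ [L,U] with 0 ≤ L ≤ U ≤ 1. Then θ lies in the union over j = 0,…,r of the intervals [(arcsin√L + jπ)/R, (arcsin√U + jπ)/R] and over l = 1,…,r of [(−arcsin√U + lπ)/R, (−arcsin√L + lπ)/R]. -/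
open Real

lemma sin_sq_add_nat_mul_pi (x : ℝ) : ∀ n : ℕ, sin (x + n * π) ^ 2 = sin x ^ 2 := by
  intro n
  induction n with
  | zero => simp
  | succ k ih =>
      have : x + (k + 1 : ℕ) * π = (x + k * π) + π := by push_cast; ring
      rw [this, Real.sin_add_pi, neg_pow, ih]
      simp

lemma qae_key (L U : ℝ) (hL0 : 0 ≤ L) (y : ℝ) (hy0 : 0 ≤ y) (hy1 : y ≤ π / 2)
    (h1 : L ≤ sin y ^ 2) (h2 : sin y ^ 2 ≤ U) :
    arcsin (sqrt L) ≤ y ∧ y ≤ arcsin (sqrt U) := by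
  have hsy : 0 ≤ sin y := sin_nonneg_of_nonneg_of_le_pi hy0 (by linarith [pi_pos])
  have hL' : sqrt L ≤ sin y := by
    have := Real.sqrt_le_sqrt h1
    rwa [Real.sqrt_sq hsy] at this
  have hU' : sin y ≤ sqrt U := by
    have := Real.sqrt_le_sqrt h2
    rwa [Real.sqrt_sq hsy] at this
  have hy : arcsin (sin y) = y := Real.arcsin_sin (by linarith [pi_pos]) hy1
  constructor
  · have := Real.monotone_arcsin hL'
    rwa [hy] at this
  · have := Real.monotone_arcsin hU'
    rwa [hy] at this

/-- Period ambiguity in adaptive QAE: if `sin²(Rθ) ∈ [L,U]` with `R = 2r+1` and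
`θ ∈ [0, π/2]`, then `θ` lies in one of the `2r+1` candidate intervals
`[(arcsin√L + jπ)/R, (arcsin√U + jπ)/R]` (for `0 ≤ j ≤ r`) or
`[(−arcsin√U + lπ)/R, (−arcsin√L + lπ)/R]` (for `1 ≤ l ≤ r`). -/
theorem qae_period_ambiguity
    (θ : ℝ) (hθ : θ ∈ Set.Icc (0 : ℝ) (π / 2))
    (r : ℕ) (R : ℝ) (hR : R = 2 * r + 1)
    (L U : ℝ) (hLU : 0 ≤ L ∧ L ≤ U ∧ U ≤ 1)
    (hconf : sin (R * θ) ^ 2 ∈ Set.Icc L U) :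
    (∃ j : ℕ, j ≤ r ∧
      θ ∈ Set.Icc ((arcsin (sqrt L) + j * π) / R) ((arcsin (sqrt U) + j * π) / R)) ∨
    (∃ l : ℕ, 1 ≤ l ∧ l ≤ r ∧
      θ ∈ Set.Icc ((-arcsin (sqrt U) + l * π) / R) ((-arcsin (sqrt L) + l * π) / R)) := by
  obtain ⟨hθ0, hθ1⟩ := hθ
  obtain ⟨hL0, hLUle, hU1⟩ := hLU
  obtain ⟨hc1, hc2⟩ := hconf
  have hπ : 0 < π := pi_pos
  have hRpos : 0 < R := by rw [hR]; positivity
  set x := R * θ with hxdef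
  have hx0 : 0 ≤ x := mul_nonneg hRpos.le hθ0
  have hxub : x ≤ (2 * r + 1) * (π / 2) := by
    rw [hxdef, hR]
    have h1 : (0:ℝ) ≤ 2 * r + 1 := by positivity
    nlinarith
  -- find the half-period segment containing x
  obtain ⟨m, hm1, hm2, hm3⟩ : ∃ m : ℕ, m ≤ 2 * r ∧ (m : ℝ) * (π/2) ≤ x ∧ x ≤ (m+1) * (π/2) := by
    set n : ℤ := ⌊x / (π/2)⌋ with hn
    have hn0 : 0 ≤ n := Int.le_floor.mpr (by push_cast; positivity)
    by_cases hcase : n ≤ 2 * r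
    · refine ⟨n.toNat, ?_, ?_, ?_⟩
      · exact_mod_cast (Int.toNat_le.mpr hcase).trans (le_refl _)
      · have h := Int.floor_le (x / (π/2))
        have : (n.toNat : ℝ) = (n : ℝ) := by exact_mod_cast Int.toNat_of_nonneg hn0
        rw [this]
        calc (n : ℝ) * (π/2) ≤ (x / (π/2)) * (π/2) := by
              apply mul_le_mul_of_nonneg_right h (by positivity)
          _ = x := by field_simp
      · have h := (Int.lt_floor_add_one (x / (π/2))).le
        have hcast : (n.toNat : ℝ) = (n : ℝ) := by exact_mod_cast Int.toNat_of_nonneg hn0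
        rw [hcast]
        calc x = (x / (π/2)) * (π/2) := by field_simp
          _ ≤ ((n : ℝ) + 1) * (π/2) := by
              apply mul_le_mul_of_nonneg_right h (by positivity)
    · push_neg at hcase
      have hge : (2 * (r:ℝ) + 1) ≤ x / (π/2) := by
        have : ((2 * r + 1 : ℤ) : ℝ) ≤ (n : ℝ) := by exact_mod_cast hcase
        have h2 : (n:ℝ) ≤ x / (π/2) := by rw [hn]; exact_mod_cast Int.floor_le (x / (π/2))
        push_cast at this
        linarith
      have hxle : (2 * (r:ℝ) + 1) * (π/2) ≤ x := by
        calc (2 * (r:ℝ) + 1) * (π/2) ≤ (x / (π/2)) * (π/2) := by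
              apply mul_le_mul_of_nonneg_right hge (by positivity)
          _ = x := by field_simp
      refine ⟨2 * r, le_refl _, ?_, ?_⟩
      · push_cast
        nlinarith
      · push_cast
        push_cast at hxub
        linarith
  rcases Nat.even_or_odd m with ⟨j, hj⟩ | ⟨j, hj⟩
  · -- m = j + j : increasing half-period
    have hjr : j ≤ r := by omega
    set y := x - j * π with hy
    have hy0 : 0 ≤ y := by
      have : (m : ℝ) * (π/2) = j * π := by rw [hj]; push_cast; ring
      rw [hy]; linarith [this ▸ hm2]
    have hy1 : y ≤ π / 2 := by
      have : ((m:ℝ)+1) * (π/2) = j * π + π/2 := by rw [hj]; push_cast; ring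
      rw [hy]; linarith [this ▸ hm3]
    have hsq : sin y ^ 2 = sin x ^ 2 := by
      have := sin_sq_add_nat_mul_pi y j
      rw [hy] at this ⊢
      rw [← this]; ring_nf
    obtain ⟨hk1, hk2⟩ := qae_key L U hL0 y hy0 hy1 (by rw [hsq]; exact hc1) (by rw [hsq]; exact hc2)
    left
    refine ⟨j, hjr, ?_, ?_⟩
    · rw [div_le_iff₀ hRpos]
      have : θ * R = x := by rw [hxdef]; ring
      rw [this, hy] at *
      linarith
    · rw [le_div_iff₀ hRpos]
      have : θ * R = x := by rw [hxdef]; ring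
      rw [this]
      rw [hy] at hk2
      linarith
  · -- m = 2j + 1 : decreasing half-period, l = j+1
    have hjr : j + 1 ≤ r := by omega
    set l := j + 1 with hl
    set y := l * π - x with hy
    have hy0 : 0 ≤ y := by
      have : ((m:ℝ)+1) * (π/2) = l * π - π/2 + π/2 := by rw [hj, hl]; push_cast; ring
      rw [hy]; have := this ▸ hm3; linarith
    have hy1 : y ≤ π / 2 := by
      have : (m : ℝ) * (π/2) = l * π - π/2 := by rw [hj, hl]; push_cast; ring
      rw [hy]; have := this ▸ hm2; linarith
    have hsq : sin y ^ 2 = sin x ^ 2 := by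
      have h1 := sin_sq_add_nat_mul_pi (-x) l
      have h2 : (-x) + l * π = y := by rw [hy]; ring
      rw [h2, Real.sin_neg, neg_pow] at h1
      simpa using h1
    obtain ⟨hk1, hk2⟩ := qae_key L U hL0 y hy0 hy1 (by rw [hsq]; exact hc1) (by rw [hsq]; exact hc2)
    right
    refine ⟨l, by omega, hjr, ?_, ?_⟩
    · rw [div_le_iff₀ hRpos]
      have hx' : θ * R = x := by rw [hxdef]; ring
      rw [hx']
      rw [hy] at hk2
      push_cast
      push_cast at hk2
      linarith
    · rw [le_div_iff₀ hRpos]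
      have hx' : θ * R = x := by rw [hxdef]; ring
      rw [hx']
      rw [hy] at hk1
      push_cast
      push_cast at hk1
      linarith
end

section
/- Fix ε > 0, k ≥ 2, and l ∈ {1,…,k−1}. Suppose each modulus satisfies nᵢ ≤ C·(1/ε)^(1/k) and the product of any l of them bounds the per-round circuit depth via N/Nᵢ where Nᵢ is a product of l moduli. Then the maximal oracle-call depth per round is at most C^(k−l)·(1/ε)^(1−l/k), and the total number of oracle calls over all rounds is O((1/ε)^(1+l/k)). -/
open Finset

theorem Finset.prod_le_pow_card_of_nonneg {ι R : Type*} [CommMonoidWithZero R] [PartialOrder R]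
    [ZeroLEOneClass R] [PosMulMono R] (s : Finset ι) {f : ι → R} {b : R}
    (h0 : ∀ i ∈ s, 0 ≤ f i) (hb : ∀ i ∈ s, f i ≤ b) :
    ∏ i ∈ s, f i ≤ b ^ s.card := by
  simpa only [prod_const] using prod_le_prod h0 hb

theorem Real.rpow_one_div_natCast_pow {x : ℝ} (hx : 0 ≤ x) (k m : ℕ) :
    (x ^ ((1 : ℝ) / k)) ^ m = x ^ ((m : ℝ) / k) := by
  rw [← Real.rpow_mul_natCast hx, one_div_mul_eq_div]

theorem qoprime_depth_query_tradeoff_general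
    (k l : ℕ) (hk : 2 ≤ k)
    (ε C : ℝ) (hε : 0 < ε)
    (n : Fin k → ℝ) (hn1 : ∀ i, 1 ≤ n i)
    (hbound : ∀ i, n i ≤ C * (1 / ε) ^ ((1 : ℝ) / k))
    (S : Finset (Fin k)) (hScard : S.card = l) :
    (∏ i ∈ Sᶜ, n i) ≤ C ^ (k - l) * (1 / ε) ^ (1 - (l : ℝ) / k) ∧
    (∏ i ∈ Sᶜ, n i) * (∏ i ∈ S, n i) ^ 2 ≤
      C ^ (k + l) * (1 / ε) ^ (1 + (l : ℝ) / k) := by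
  set b := C * (1 / ε) ^ ((1 : ℝ) / k)
  have hk0 : (k : ℝ) ≠ 0 := Nat.cast_ne_zero.2 (by omega)
  have hlk : l ≤ k := by simpa [hScard] using S.card_le_univ
  have hb_pow (m : ℕ) : b ^ m = C ^ m * (1 / ε) ^ ((m : ℝ) / k) := by
    rw [mul_pow, Real.rpow_one_div_natCast_pow (by positivity)]
  have hn0 : ∀ i, 0 ≤ n i := fun i ↦ zero_le_one.trans (hn1 i)
  have hSc : ∏ i ∈ Sᶜ, n i ≤ b ^ (k - l) := by
    simpa only [card_compl, Fintype.card_fin, hScard] using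
      prod_le_pow_card_of_nonneg Sᶜ (fun i _ ↦ hn0 i) fun i _ ↦ hbound i
  have hS : ∏ i ∈ S, n i ≤ b ^ l :=
    hScard ▸ prod_le_pow_card_of_nonneg S (fun i _ ↦ hn0 i) fun i _ ↦ hbound i
  constructor
  · calc ∏ i ∈ Sᶜ, n i ≤ b ^ (k - l) := hSc
      _ = C ^ (k - l) * (1 / ε) ^ (1 - (l : ℝ) / k) := by
        rw [hb_pow, Nat.cast_sub hlk, sub_div, div_self hk0]
  · calc (∏ i ∈ Sᶜ, n i) * (∏ i ∈ S, n i) ^ 2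
        ≤ b ^ (k - l) * (b ^ l) ^ 2 :=
          mul_le_mul hSc (pow_le_pow_left₀ (prod_nonneg fun i _ ↦ hn0 i) hS 2)
            (by positivity) ((prod_nonneg fun i _ ↦ hn0 i).trans hSc)
      _ = b ^ (k + l) := by rw [← pow_mul, ← pow_add]; congr 1; omega
      _ = C ^ (k + l) * (1 / ε) ^ (1 + (l : ℝ) / k) := by
        rw [hb_pow, Nat.cast_add, add_div, div_self hk0]

/-- Depth/query tradeoff of QoPrime QAE: with `k` coprime moduli each of size
at most `C·(1/ε)^{1/k}`, estimating the amplitude modulo a product `N_S` of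
`l` of them uses per-round circuits of oracle depth `N/N_S = ∏_{i∉S} nᵢ`,
bounded by `C^{k−l}·(1/ε)^{1−l/k}`, while the total number of oracle calls
(depth times the `N_S²` repetitions) is `O((1/ε)^{1+l/k})`. -/
theorem qoprime_depth_query_tradeoff
    (k l : ℕ) (hk : 2 ≤ k) (hl1 : 1 ≤ l) (hlk : l ≤ k - 1)
    (ε C : ℝ) (hε : 0 < ε) (hC : 0 < C)
    (n : Fin k → ℝ) (hn1 : ∀ i, 1 ≤ n i)
    (hbound : ∀ i, n i ≤ C * (1 / ε) ^ ((1 : ℝ) / k))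
    (S : Finset (Fin k)) (hScard : S.card = l) :
    (∏ i ∈ Sᶜ, n i) ≤ C ^ (k - l) * (1 / ε) ^ (1 - (l : ℝ) / k) ∧
    (∏ i ∈ Sᶜ, n i) * (∏ i ∈ S, n i) ^ 2 ≤
      C ^ (k + l) * (1 / ε) ^ (1 + (l : ℝ) / k) :=
  qoprime_depth_query_tradeoff_general k l hk ε C hε n hn1 hbound S hScard
end
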